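/- arXiv:math/0111258 — 6 statements merged into one kernel-verified Lean document; each statement's English description precedes it below -/
import Mathlib

section
/- Let H be an invertible n×n matrix over ℂ, written in block form H = [[A, B],[C, D]] where A is a j×j block and D is an (n−j)×(n−j) block, and write its inverse in the same block pattern H⁻¹ = [[E, F],[G, I]], where E is j×j and I is (n−j)×(n−j). Then det D = det E · det H. -/
/-- Let `H` be an invertible `n × n` matrix over `ℂ`, written in block form
`H = [[A, B], [C, D]]` where `A` is a `j × j` block and `D` is an `(n-j) × (n-j)` block
(here `k = n - j`), and write its inverse in the same block pattern
`H⁻¹ = [[E, F], [G, I]]`.  Then `det D = det E * det H`. -/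
theorem det_block_inv_block {j k : ℕ}
    (A : Matrix (Fin j) (Fin j) ℂ) (B : Matrix (Fin j) (Fin k) ℂ)
    (C : Matrix (Fin k) (Fin j) ℂ) (D : Matrix (Fin k) (Fin k) ℂ)
    (E : Matrix (Fin j) (Fin j) ℂ) (F : Matrix (Fin j) (Fin k) ℂ)
    (G : Matrix (Fin k) (Fin j) ℂ) (I : Matrix (Fin k) (Fin k) ℂ)
    (hH : IsUnit (Matrix.fromBlocks A B C D))
    (hinv : (Matrix.fromBlocks A B C D)⁻¹ = Matrix.fromBlocks E F G I) :
    D.det = E.det * (Matrix.fromBlocks A B C D).det := by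
  have h1 : Matrix.fromBlocks A B C D * Matrix.fromBlocks E F G I = 1 := by
    rw [← hinv]
    exact Matrix.mul_nonsing_inv _ ((Matrix.isUnit_iff_isUnit_det _).mp hH)
  rw [Matrix.fromBlocks_multiply, ← Matrix.fromBlocks_one] at h1
  have h11 : A * E + B * G = 1 := by
    have := congrArg Matrix.toBlocks₁₁ h1; simpa only [Matrix.toBlocks_fromBlocks₁₁] using this
  have h21 : C * E + D * G = 0 := by
    have := congrArg Matrix.toBlocks₂₁ h1; simpa only [Matrix.toBlocks_fromBlocks₂₁] using this
  have key : Matrix.fromBlocks A B C D * Matrix.fromBlocks E 0 G 1 =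
      Matrix.fromBlocks 1 B 0 D := by
    rw [Matrix.fromBlocks_multiply]
    simp [h11, h21]
  have hdet := congrArg Matrix.det key
  rw [Matrix.det_mul, Matrix.det_fromBlocks_zero₁₂, Matrix.det_fromBlocks_zero₂₁] at hdet
  simp at hdet
  rw [← hdet]; ring
end

section
/- Let H be an invertible n×n matrix over ℂ, written in block form H = [[A, B],[C, D]] where A is a j×j block and D is an (n−j)×(n−j) block, and write its inverse in the same block pattern H⁻¹ = [[E, F],[G, I]], where E is j×j and I is (n−j)×(n−j). Then the block D is invertible if and only if the block E is invertible. -/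
open Matrix

lemma aux22 {m n : Type*} [Fintype m] [Fintype n] [DecidableEq m] [DecidableEq n]
    (A : Matrix m m ℂ) (B : Matrix m n ℂ) (C : Matrix n m ℂ) (D : Matrix n n ℂ)
    (hH : IsUnit (fromBlocks A B C D)) (hD : IsUnit D) :
    IsUnit ((fromBlocks A B C D)⁻¹.toBlocks₁₁) := by
  letI := hD.invertible
  letI := hH.invertible
  letI := Matrix.invertibleOfFromBlocks₂₂Invertible A B C D
  have h := Matrix.invOf_fromBlocks₂₂_eq A B C D
  rw [Matrix.invOf_eq_nonsing_inv] at h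
  rw [h, Matrix.toBlocks_fromBlocks₁₁]
  exact isUnit_of_invertible _

lemma aux11 {m n : Type*} [Fintype m] [Fintype n] [DecidableEq m] [DecidableEq n]
    (A : Matrix m m ℂ) (B : Matrix m n ℂ) (C : Matrix n m ℂ) (D : Matrix n n ℂ)
    (hH : IsUnit (fromBlocks A B C D)) (hA : IsUnit A) :
    IsUnit ((fromBlocks A B C D)⁻¹.toBlocks₂₂) := by
  letI := hA.invertible
  letI := hH.invertible
  letI := Matrix.invertibleOfFromBlocks₁₁Invertible A B C D
  have h := Matrix.invOf_fromBlocks₁₁_eq A B C D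
  rw [Matrix.invOf_eq_nonsing_inv] at h
  rw [h, Matrix.toBlocks_fromBlocks₂₂]
  exact isUnit_of_invertible _

/-- Let `H` be an invertible `n × n` matrix over `ℂ`, written in block form
`H = [[A, B], [C, D]]` where `A` is a `j × j` block and `D` is an `(n-j) × (n-j)` block
(here `k = n - j`), and write its inverse in the same block pattern
`H⁻¹ = [[E, F], [G, I]]`.  Then `D` is invertible if and only if `E` is invertible. -/
theorem isUnit_block_iff_isUnit_inv_block {j k : ℕ}
    (A : Matrix (Fin j) (Fin j) ℂ) (B : Matrix (Fin j) (Fin k) ℂ)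
    (C : Matrix (Fin k) (Fin j) ℂ) (D : Matrix (Fin k) (Fin k) ℂ)
    (E : Matrix (Fin j) (Fin j) ℂ) (F : Matrix (Fin j) (Fin k) ℂ)
    (G : Matrix (Fin k) (Fin j) ℂ) (I : Matrix (Fin k) (Fin k) ℂ)
    (hH : IsUnit (Matrix.fromBlocks A B C D))
    (hinv : (Matrix.fromBlocks A B C D)⁻¹ = Matrix.fromBlocks E F G I) :
    IsUnit D ↔ IsUnit E := by
  have hdet : IsUnit (fromBlocks A B C D).det :=
    (Matrix.isUnit_iff_isUnit_det _).mp hH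
  constructor
  · intro hD
    have := aux22 A B C D hH hD
    rwa [hinv, Matrix.toBlocks_fromBlocks₁₁] at this
  · intro hE
    have hN : IsUnit (fromBlocks E F G I) := by
      rw [← hinv]
      exact Matrix.isUnit_nonsing_inv_iff.mpr hH
    have := aux11 E F G I hN hE
    rwa [← hinv, Matrix.nonsing_inv_nonsing_inv _ hdet,
      Matrix.toBlocks_fromBlocks₂₂] at this
end

section
/- With B a q×n matrix over a commutative ring R and w ∈ Rⁿ, for any indices i₁,…,i_q ∈ {1,…,n} and any indices j₁,…,j_{q+1} ∈ {1,…,n} one has the identity D(i₁,…,i_q) · m(j₁,…,j_{q+1}) = Σ_{l=1}^{q+1} (−1)^{l+1} D(j₁,…,ĵ_l,…,j_{q+1}) · m(j_l, i₁,…,i_q), where ĵ_l means that the index j_l is omitted. -/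
open Matrix

/-- `D(i₁, …, i_q)`: the determinant of the `q × q` matrix whose `k`-th row is
`(B k i₁, …, B k i_q)`, for a `q × n` matrix `B`. -/
def minorD {R : Type*} [CommRing R] {q n : ℕ} (B : Matrix (Fin q) (Fin n) R)
    (i : Fin q → Fin n) : R :=
  (B.submatrix id i).det

/-- `m(j₁, …, j_{q+1})`: the determinant of the `(q+1) × (q+1)` matrix whose `k`-th row
(`1 ≤ k ≤ q`) is `(B k j₁, …, B k j_{q+1})` and whose last row is `(w j₁, …, w j_{q+1})`. -/
def minorM {R : Type*} [CommRing R] {q n : ℕ} (B : Matrix (Fin q) (Fin n) R)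
    (w : Fin n → R) (j : Fin (q + 1) → Fin n) : R :=
  (Matrix.of fun r c : Fin (q + 1) =>
    Fin.lastCases (w (j c)) (fun r' : Fin q => B r' (j c)) r).det

/-- For any indices `i₁, …, i_q` and `j₁, …, j_{q+1}` in `{1, …, n}` one has
`D(i₁,…,i_q) · m(j₁,…,j_{q+1})
  = Σ_{l=1}^{q+1} (−1)^{l+1} D(j₁,…,ĵ_l,…,j_{q+1}) · m(j_l, i₁,…,i_q)`
(indices here are `0`-based, so the sign `(−1)^{l+1}` becomes `(−1)^l`). -/
theorem minorD_mul_minorM {R : Type*} [CommRing R] {q n : ℕ}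
    (B : Matrix (Fin q) (Fin n) R) (w : Fin n → R)
    (i : Fin q → Fin n) (j : Fin (q + 1) → Fin n) :
    minorD B i * minorM B w j =
      ∑ l : Fin (q + 1),
        (-1 : R) ^ (l : ℕ) * minorD B (j ∘ l.succAbove) * minorM B w (Fin.cons (j l) i) := by
  -- A : B with w appended as last row
  set A : Matrix (Fin (q+1)) (Fin n) R :=
    Matrix.of (fun r c => Fin.lastCases (w c) (fun r' : Fin q => B r' c) r) with hA
  have hAcast : ∀ (r' : Fin q) c, A (Fin.castSucc r') c = B r' c := by
    intro r' c; simp [hA]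
  have hAlast : ∀ c, A (Fin.last q) c = w c := by
    intro c; simp [hA]
  have hminorM : ∀ f : Fin (q+1) → Fin n, minorM B w f = (A.submatrix id f).det :=
    fun f => rfl
  -- N r : determinant of A with row r removed, columns i
  set N : Fin (q+1) → R := fun r => (A.submatrix r.succAbove i).det with hN
  -- M r : (q+1)×(q+1) matrix with rows of B and last row = row r of A, columns j
  set M : Fin (q+1) → Matrix (Fin (q+1)) (Fin (q+1)) R :=
    fun r => Matrix.of (fun c1 c2 => Fin.lastCases (A r (j c2))
      (fun r' : Fin q => B r' (j c2)) c1) with hMdef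
  have hsq : ∀ m : ℕ, ((-1:R))^m * (-1:R)^m = 1 := by
    intro m
    rw [← pow_add, show m + m = 2*m from by ring, pow_mul]
    simp
  have hexp : ∀ l : Fin (q+1), minorM B w (Fin.cons (j l) i) =
      ∑ r : Fin (q+1), (-1:R)^(r:ℕ) * A r (j l) * N r := by
    intro l
    rw [hminorM, Matrix.det_succ_column_zero]
    refine Finset.sum_congr rfl fun r _ => ?_
    have e1 : (A.submatrix id (Fin.cons (j l) i)) r 0 = A r (j l) := by simp
    have e2 : (A.submatrix id (Fin.cons (j l) i)).submatrix r.succAbove Fin.succ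
        = A.submatrix r.succAbove i := by
      ext a b; simp
    rw [e1, e2]
  have hkey : ∀ r : Fin (q+1),
      (∑ l : Fin (q+1), (-1:R)^(l:ℕ) * minorD B (j ∘ l.succAbove) * A r (j l))
        = (-1:R)^q * (M r).det := by
    intro r
    rw [Matrix.det_succ_row (M r) (Fin.last q), Finset.mul_sum]
    refine Finset.sum_congr rfl fun l _ => ?_
    have h1 : (M r) (Fin.last q) l = A r (j l) := by simp [hMdef]
    have h2 : ((M r).submatrix (Fin.last q).succAbove l.succAbove).det
        = minorD B (j ∘ l.succAbove) := by
      rw [minorD]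
      congr 1
      ext a b
      simp [hMdef]
    rw [h1, h2, Fin.val_last, pow_add]
    linear_combination (-((-1:R)^(l:ℕ) * minorD B (j ∘ l.succAbove) * A r (j l))) * hsq q
  have hzero : ∀ r' : Fin q, (M (Fin.castSucc r')).det = 0 := by
    intro r'
    refine Matrix.det_zero_of_row_eq (i := Fin.castSucc r') (j := Fin.last q)
      (Fin.ne_of_lt (Fin.castSucc_lt_last r')) ?_
    funext c
    simp [hMdef, hAcast]
  have hlast : (M (Fin.last q)).det = minorM B w j := by
    rw [hminorM]
    congr 1
    ext c1 c2
    refine Fin.lastCases ?_ (fun c1' => ?_) c1 <;> simp [hMdef, hAlast, hAcast]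
  have hNlast : N (Fin.last q) = minorD B i := by
    simp only [hN, minorD]
    congr 1
    ext a b
    simp [hAcast]
  calc minorD B i * minorM B w j
      = ∑ r : Fin (q+1), (-1:R)^(r:ℕ) * N r * ((-1:R)^q * (M r).det) := by
        rw [Fin.sum_univ_castSucc]
        simp only [hzero, hlast, hNlast, mul_zero, Finset.sum_const_zero, zero_add,
          Fin.val_last]
        linear_combination (-(minorD B i * minorM B w j)) * hsq q
    _ = ∑ l : Fin (q + 1),
        (-1 : R) ^ (l : ℕ) * minorD B (j ∘ l.succAbove) * minorM B w (Fin.cons (j l) i) := by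
        simp_rw [← hkey, Finset.mul_sum]
        rw [Finset.sum_comm]
        refine Finset.sum_congr rfl fun l _ => ?_
        rw [hexp l, Finset.mul_sum]
        refine Finset.sum_congr rfl fun r _ => ?_
        ring
end

section
/- With B a q×n matrix over a commutative ring R, w ∈ Rⁿ, and f₁,…,f_q ∈ R, suppose that DF := D(n−q+1, n−q+2, …, n) is a unit of R. Then the ideal of R generated by f₁,…,f_q together with all the elements m(j₁,…,j_{q+1}) for j₁ < … < j_{q+1} in {1,…,n} is equal to the ideal of R generated by f₁,…,f_q together with the n−q elements m̃_i := m(i, n−q+1, n−q+2, …, n) for 1 ≤ i ≤ n−q. -/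
open Matrix

/-- Modifying `w` by a linear combination of the rows of `B` does not change the minors `m`. -/
lemma minorM_rowops {R : Type*} [CommRing R] {q n : ℕ} (B : Matrix (Fin q) (Fin n) R)
    (w : Fin n → R) (a : Fin q → R) (j : Fin (q + 1) → Fin n) :
    minorM B (fun c => w c - ∑ k, a k * B k c) j = minorM B w j := by
  classical
  set N : Matrix (Fin (q + 1)) (Fin (q + 1)) R :=
    Matrix.of fun r c : Fin (q + 1) =>
      Fin.lastCases (w (j c)) (fun r' : Fin q => B r' (j c)) r with hN
  have hrow : ∀ k : Fin q, N (Fin.castSucc k) = fun c => B k (j c) := by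
    intro k; funext c; simp [hN]
  have hlast : N (Fin.last q) = fun c => w (j c) := by
    funext c; simp [hN]
  have hnotmem : Fin.last q ∉ Finset.univ.image (Fin.castSucc : Fin q → Fin (q + 1)) := by
    simp only [Finset.mem_image, Finset.mem_univ, true_and, not_exists]
    exact fun k => (Fin.castSucc_lt_last k).ne
  have key := Matrix.det_updateRow_sum_aux N
      (Finset.univ.image (Fin.castSucc : Fin q → Fin (q + 1))) hnotmem
      (Fin.snoc (fun k => -(a k)) 0) 1
  have hvec : (1 : R) • N (Fin.last q) + ∑ r ∈ Finset.univ.image Fin.castSucc,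
      (Fin.snoc (fun k => -(a k)) 0 : Fin (q + 1) → R) r • N r
      = fun c => w (j c) - ∑ k, a k * B k (j c) := by
    rw [Finset.sum_image (fun x _ y _ h => Fin.castSucc_injective _ h)]
    funext c
    simp only [one_smul, hlast, hrow, Fin.snoc_castSucc, Pi.add_apply, Pi.smul_apply,
      smul_eq_mul, Finset.sum_apply, neg_mul, sub_eq_add_neg]
    congr 1
    rw [← Finset.sum_neg_distrib]
  have hmat : (Matrix.of fun r c : Fin (q + 1) =>
      Fin.lastCases (w (j c) - ∑ k, a k * B k (j c)) (fun r' : Fin q => B r' (j c)) r)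
      = N.updateRow (Fin.last q) (fun c => w (j c) - ∑ k, a k * B k (j c)) := by
    ext r c
    refine Fin.lastCases ?_ ?_ r
    · simp
    · intro r'
      simp [hN, Matrix.updateRow_ne (Fin.castSucc_lt_last r').ne]
  rw [hvec] at key
  have : minorM B (fun c => w c - ∑ k, a k * B k c) j
      = (N.updateRow (Fin.last q) (fun c => w (j c) - ∑ k, a k * B k (j c))).det := by
    rw [minorM, ← hmat]
  rw [this, key, one_smul, minorM]

/-- Laplace expansion of `m` along the last row. -/
lemma minorM_expand {R : Type*} [CommRing R] {q n : ℕ} (B : Matrix (Fin q) (Fin n) R)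
    (w : Fin n → R) (j : Fin (q + 1) → Fin n) :
    minorM B w j = ∑ c : Fin (q + 1),
      (-1) ^ (q + (c : ℕ)) * w (j c) * minorD B (fun r => j (c.succAbove r)) := by
  rw [minorM, Matrix.det_succ_row _ (Fin.last q)]
  refine Finset.sum_congr rfl fun c _ => ?_
  have h1 : ((Fin.last q : Fin (q + 1)) : ℕ) = q := rfl
  have h2 : (Matrix.of fun r c : Fin (q + 1) =>
      Fin.lastCases (w (j c)) (fun r' : Fin q => B r' (j c)) r) (Fin.last q) c = w (j c) := by
    simp
  rw [h1, h2]
  congr 1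
  rw [minorD]
  congr 1
  ext r r2
  simp [Fin.succAbove_last]

/-- Let `R` be a commutative ring, `q < n` (encoded as `n = p + q` with `0 < p`),
`B` a `q × n` matrix over `R`, `w ∈ Rⁿ` and `f₁, …, f_q ∈ R`.  Suppose that
`DF := D(n−q+1, …, n)` (the minor of `B` on the last `q` columns) is a unit of `R`.
Then the ideal generated by `f₁, …, f_q` together with all minors `m(j₁,…,j_{q+1})`
for `j₁ < … < j_{q+1}` equals the ideal generated by `f₁, …, f_q` together with the
`n − q` minors `m̃_i := m(i, n−q+1, …, n)`, `1 ≤ i ≤ n−q`. -/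
theorem ideal_minors_eq_ideal_special_minors {R : Type*} [CommRing R] {p q : ℕ}
    (hp : 0 < p) (B : Matrix (Fin q) (Fin (p + q)) R) (w : Fin (p + q) → R)
    (f : Fin q → R)
    (hDF : IsUnit (minorD B (fun k : Fin q => Fin.natAdd p k))) :
    Ideal.span (Set.range f ∪
        {x : R | ∃ j : Fin (q + 1) → Fin (p + q), StrictMono j ∧ x = minorM B w j}) =
      Ideal.span (Set.range f ∪
        Set.range (fun i : Fin p =>
          minorM B w (Fin.cons (Fin.castAdd q i) (fun k : Fin q => Fin.natAdd p k)))) := by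
  classical
  set M : Matrix (Fin q) (Fin q) R := B.submatrix id (fun k : Fin q => Fin.natAdd p k) with hM
  have hMdet : IsUnit M.det := hDF
  have hMTdet : IsUnit Mᵀ.det := by rwa [Matrix.det_transpose]
  haveI : Invertible Mᵀ := Mᵀ.invertibleOfIsUnitDet hMTdet
  set a : Fin q → R := ⅟Mᵀ *ᵥ (fun k => w (Fin.natAdd p k)) with ha
  have hsolve : ∀ k : Fin q, w (Fin.natAdd p k) = ∑ k', a k' * B k' (Fin.natAdd p k) := by
    intro k
    have : Mᵀ *ᵥ a = fun k => w (Fin.natAdd p k) := by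
      rw [ha, Matrix.mulVec_mulVec, mul_invOf_self, Matrix.one_mulVec]
    have h2 := congrFun this k
    rw [Matrix.mulVec, dotProduct] at h2
    rw [← h2]
    refine Finset.sum_congr rfl fun k' _ => ?_
    simp [hM, mul_comm]
  set w' : Fin (p + q) → R := fun c => w c - ∑ k, a k * B k c with hw'
  have hw'0 : ∀ k : Fin q, w' (Fin.natAdd p k) = 0 := by
    intro k; rw [hw']; simp only [sub_eq_zero]; exact hsolve k
  -- the special index functions
  set jspec : Fin p → Fin (q + 1) → Fin (p + q) := fun i =>
    Fin.cons (Fin.castAdd q i) (fun k : Fin q => Fin.natAdd p k) with hjspec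
  -- key computation for the special minors
  have key : ∀ i : Fin p,
      minorM B w (jspec i) = (-1) ^ q * (w' (Fin.castAdd q i) * M.det) := by
    intro i
    rw [← minorM_rowops B w a (jspec i), ← hw', minorM_expand]
    rw [Fintype.sum_eq_single (0 : Fin (q + 1))]
    · have h0 : jspec i 0 = Fin.castAdd q i := by simp [hjspec]
      have hD : minorD B (fun r => jspec i ((0 : Fin (q + 1)).succAbove r)) = M.det := by
        have hfun : (fun r : Fin q => jspec i ((0 : Fin (q + 1)).succAbove r))
            = fun k : Fin q => Fin.natAdd p k := by
          funext r
          simp [hjspec, Fin.zero_succAbove]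
        rw [minorD, hfun, hM]
      rw [h0, hD]
      simp only [Fin.val_zero, pow_zero, mul_one, add_zero]
      ring
    · intro c hc
      obtain ⟨k, rfl⟩ : ∃ k : Fin q, c = Fin.succ k := ⟨c.pred hc, (Fin.succ_pred c hc).symm⟩
      have : jspec i (Fin.succ k) = Fin.natAdd p k := by simp [hjspec]
      rw [this, hw'0 k]
      ring
  -- the RHS ideal
  set J : Ideal R := Ideal.span (Set.range f ∪
      Set.range (fun i : Fin p => minorM B w (jspec i))) with hJ
  have hmtmem : ∀ i : Fin p, minorM B w (jspec i) ∈ J := fun i =>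
    Ideal.subset_span (Set.mem_union_right _ ⟨i, rfl⟩)
  obtain ⟨u, hu⟩ := hMdet
  have hw'mem : ∀ c : Fin (p + q), w' c ∈ J := by
    intro c
    refine Fin.addCases ?_ ?_ c
    · intro i
      have hkey := key i
      rw [← hu] at hkey
      have hval : w' (Fin.castAdd q i) = ((-1) ^ q * ↑u⁻¹) * minorM B w (jspec i) := by
        have he : ((-1 : R) ^ q) * ((-1 : R) ^ q) = 1 := by
          rw [← pow_add, ← two_mul, pow_mul]; simp
        have hu' : (↑u : R) * ↑u⁻¹ = 1 := u.mul_inv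
        rw [hkey]
        linear_combination (-(w' (Fin.castAdd q i) * (↑u : R) * ↑u⁻¹)) * he +
          (-(w' (Fin.castAdd q i))) * hu'
      rw [hval]
      exact Ideal.mul_mem_left _ _ (hmtmem i)
    · intro k
      rw [hw'0 k]
      exact J.zero_mem
  -- strict monotonicity of the special index functions
  have hmono : ∀ i : Fin p, StrictMono (jspec i) := by
    intro i x y hxy
    have hi := i.isLt
    induction x using Fin.cases with
    | zero =>
      induction y using Fin.cases with
      | zero => exact absurd hxy (lt_irrefl _)
      | succ k =>
        simp only [hjspec, Fin.cons_zero, Fin.cons_succ]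
        rw [Fin.lt_def]
        simp only [Fin.coe_castAdd, Fin.coe_natAdd]
        omega
    | succ k =>
      induction y using Fin.cases with
      | zero => exact absurd hxy (Fin.not_lt_zero _).elim
      | succ k' =>
        simp only [hjspec, Fin.cons_succ]
        rw [Fin.lt_def]
        simp only [Fin.coe_natAdd]
        have := hxy
        rw [Fin.succ_lt_succ_iff, Fin.lt_def] at this
        omega
  apply le_antisymm
  · rw [Ideal.span_le]
    rintro x (hx | ⟨j, hmonoj, rfl⟩)
    · exact Ideal.subset_span (Set.mem_union_left _ hx)
    · rw [← minorM_rowops B w a j, ← hw', minorM_expand]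
      refine Ideal.sum_mem _ fun c _ => ?_
      exact Ideal.mul_mem_right _ _ (Ideal.mul_mem_left _ _ (hw'mem (j c)))
  · refine Ideal.span_mono (Set.union_subset_union_right _ ?_)
    rintro x ⟨i, rfl⟩
    exact ⟨jspec i, hmono i, rfl⟩
end

section
/- Let H be an n×n matrix (n ≥ 2) over a commutative ring R, let B denote the (n−2)×n matrix formed by the first n−2 rows of H and C the 2×n matrix formed by the last two rows of H. Then det H = Σ_{1 ≤ m < l ≤ n} (−1)^{m+l+1} f_{m,l} · c_{m,l}, where f_{m,l} is the determinant of the (n−2)×(n−2) matrix obtained from B by deleting columns m and l (keeping the order of the remaining columns), and c_{m,l} is the determinant of the 2×2 matrix formed by columns m and l of C (Laplace expansion of the determinant along the last two rows). -/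
open Matrix

/-- For distinct `a b : Fin (p + 2)`, the strictly increasing enumeration
`Fin p → Fin (p + 2)` of the complement of `{a, b}`; i.e. the map realizing
"delete columns `a` and `b`, keeping the order of the remaining columns". -/
def delTwo {p : ℕ} (a b : Fin (p + 2)) (hab : a ≠ b) : Fin p → Fin (p + 2) :=
  fun k => ({a, b}ᶜ : Finset (Fin (p + 2))).orderEmbOfFin (by
    rw [Finset.card_compl, Finset.card_insert_of_notMem (by simpa using hab),
      Finset.card_singleton, Fintype.card_fin]
    omega) k

lemma delTwo_card {p : ℕ} (a b : Fin (p + 2)) (hab : a ≠ b) :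
    ({a, b}ᶜ : Finset (Fin (p + 2))).card = p := by
  rw [Finset.card_compl, Finset.card_insert_of_notMem (by simpa using hab),
    Finset.card_singleton, Fintype.card_fin]
  omega

lemma delTwo_symm {p : ℕ} (a b : Fin (p + 2)) (hab : a ≠ b) :
    delTwo b a hab.symm = delTwo a b hab := by
  have hs : ({b, a} : Finset (Fin (p + 2))) = {a, b} := Finset.pair_comm b a
  have := Finset.orderEmbOfFin_unique (s := ({a, b}ᶜ : Finset (Fin (p + 2))))
    (delTwo_card a b hab) (f := delTwo b a hab.symm)
    (fun x => by rw [← hs]; exact Finset.orderEmbOfFin_mem _ _ _)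
    (Finset.orderEmbOfFin _ _).strictMono
  exact this

lemma delTwo_succAbove {p : ℕ} (b : Fin (p + 2)) (a' : Fin (p + 1))
    (h : b.succAbove a' ≠ b) :
    delTwo (b.succAbove a') b h = fun k => b.succAbove (a'.succAbove k) := by
  have := Finset.orderEmbOfFin_unique
    (s := ({b.succAbove a', b}ᶜ : Finset (Fin (p + 2)))) (delTwo_card _ _ h)
    (f := fun k => b.succAbove (a'.succAbove k))
    (fun x => by
      simp only [Finset.mem_compl, Finset.mem_insert, Finset.mem_singleton, not_or]
      exact ⟨Fin.succAbove_right_injective.ne (Fin.succAbove_ne a' x),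
        Fin.succAbove_ne b _⟩)
    ((Fin.strictMono_succAbove b).comp (Fin.strictMono_succAbove a'))
  exact this.symm

/-- Auxiliary summand for the two-row Laplace expansion. -/
def lapT {R : Type*} [CommRing R] {p : ℕ} (H : Matrix (Fin (p + 2)) (Fin (p + 2)) R)
    (a b : Fin (p + 2)) : R :=
  if h : a ≠ b then
    (-1 : R) ^ ((a : ℕ) + (b : ℕ) + 1) *
      (Matrix.of fun r c : Fin p => H (Fin.castAdd 2 r) (delTwo a b h c)).det *
      (H (Fin.natAdd p 0) a * H (Fin.natAdd p 1) b) *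
      (if a < b then 1 else -1)
  else 0

lemma lapT_self {R : Type*} [CommRing R] {p : ℕ} (H : Matrix (Fin (p + 2)) (Fin (p + 2)) R)
    (a : Fin (p + 2)) : lapT H a a = 0 := dif_neg (by simp)

lemma neg_one_pow_mod {R : Type*} [CommRing R] (m n : ℕ) (h : m % 2 = n % 2) :
    (-1 : R) ^ m = (-1 : R) ^ n := by
  rw [← Nat.div_add_mod m 2, ← Nat.div_add_mod n 2, h, pow_add, pow_add, pow_mul, pow_mul,
    neg_one_sq]
  simp

lemma natAdd_zero_eq {p : ℕ} : (Fin.natAdd p (0 : Fin 2)) = Fin.castSucc (Fin.last p) := by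
  ext; simp

lemma natAdd_one_eq {p : ℕ} : (Fin.natAdd p (1 : Fin 2)) = Fin.last (p + 1) := by
  ext; simp

/-- Laplace expansion of the determinant along the last two rows:  for an `n × n`
matrix `H` (`n = p + 2 ≥ 2`) with `B` its first `n − 2` rows and `C` its last two rows,
`det H = Σ_{1 ≤ m < l ≤ n} (−1)^{m+l+1} f_{m,l} · c_{m,l}`, where `f_{m,l}` is the minor
of `B` obtained by deleting columns `m` and `l` and `c_{m,l}` is the `2 × 2` minor of `C`
on columns `m` and `l`.  (Indices are `0`-based here, which gives the same signs.) -/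
theorem det_eq_laplace_expansion_last_two_rows {R : Type*} [CommRing R] {p : ℕ}
    (H : Matrix (Fin (p + 2)) (Fin (p + 2)) R) :
    H.det = ∑ a : Fin (p + 2), ∑ b : Fin (p + 2),
      if h : a < b then
        (-1 : R) ^ ((a : ℕ) + (b : ℕ) + 1) *
          (Matrix.of fun r c : Fin p => H (Fin.castAdd 2 r) (delTwo a b (ne_of_lt h) c)).det *
          (Matrix.of fun r c : Fin 2 => H (Fin.natAdd p r) (![a, b] c)).det
      else 0 := by
  -- Step A : expand twice along the last row.
  have stepA : H.det = ∑ b : Fin (p + 2), ∑ a : Fin (p + 2), lapT H a b := by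
    rw [Matrix.det_succ_row H (Fin.last (p + 1))]
    refine Finset.sum_congr rfl fun b _ => ?_
    rw [Matrix.det_succ_row (H.submatrix (Fin.last (p + 1)).succAbove b.succAbove) (Fin.last p),
      Finset.mul_sum, Fin.sum_univ_succAbove (fun a => lapT H a b) b, lapT_self, zero_add]
    refine Finset.sum_congr rfl fun a' _ => ?_
    have hne : b.succAbove a' ≠ b := Fin.succAbove_ne b a'
    have hrow2 : H (Fin.last (p + 1)) b = H (Fin.natAdd p 1) b := by rw [natAdd_one_eq]
    have hsubm : (H.submatrix (Fin.last (p + 1)).succAbove b.succAbove) (Fin.last p) a'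
        = H (Fin.natAdd p 0) (b.succAbove a') := by
      simp [Matrix.submatrix_apply, Fin.succAbove_last, natAdd_zero_eq]
    have hminor : ((H.submatrix (Fin.last (p + 1)).succAbove b.succAbove).submatrix
          (Fin.last p).succAbove a'.succAbove)
        = (Matrix.of fun r c : Fin p =>
            H (Fin.castAdd 2 r) (delTwo (b.succAbove a') b hne c)) := by
      ext r c
      simp only [Matrix.submatrix_apply, Matrix.of_apply, Fin.succAbove_last,
        delTwo_succAbove b a' hne]
      rfl
    rw [lapT, dif_pos hne, hrow2, hsubm, hminor]
    rcases lt_or_ge (Fin.castSucc a') b with hlt | hle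
    · have hval : (b.succAbove a' : ℕ) = (a' : ℕ) := by
        rw [Fin.succAbove_of_castSucc_lt _ _ hlt]; rfl
      have hab : b.succAbove a' < b := by
        rw [Fin.succAbove_of_castSucc_lt _ _ hlt]; exact hlt
      rw [if_pos hab, hval]
      have hsign : (-1 : R) ^ ((Fin.last (p + 1) : ℕ) + (b : ℕ)) *
          (-1 : R) ^ ((Fin.last p : ℕ) + (a' : ℕ)) = (-1 : R) ^ ((a' : ℕ) + (b : ℕ) + 1) := by
        rw [← pow_add]
        exact neg_one_pow_mod _ _ (by simp [Fin.val_last]; omega)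
      calc _ = ((-1 : R) ^ ((Fin.last (p + 1) : ℕ) + (b : ℕ)) *
            (-1 : R) ^ ((Fin.last p : ℕ) + (a' : ℕ))) *
            ((Matrix.of fun r c : Fin p =>
              H (Fin.castAdd 2 r) (delTwo (b.succAbove a') b hne c)).det *
            (H (Fin.natAdd p 0) (b.succAbove a') * H (Fin.natAdd p 1) b)) := by ring
        _ = _ := by rw [hsign]; ring
    · have hval : (b.succAbove a' : ℕ) = (a' : ℕ) + 1 := by
        rw [Fin.succAbove_of_le_castSucc _ _ hle]; rfl
      have hab : ¬ b.succAbove a' < b := by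
        rw [Fin.succAbove_of_le_castSucc _ _ hle]
        exact not_lt.mpr (le_of_lt (lt_of_le_of_lt hle Fin.castSucc_lt_succ))
      rw [if_neg hab, hval]
      have hsign : (-1 : R) ^ ((Fin.last (p + 1) : ℕ) + (b : ℕ)) *
          (-1 : R) ^ ((Fin.last p : ℕ) + (a' : ℕ)) =
          (-1 : R) ^ ((a' : ℕ) + 1 + (b : ℕ) + 1) * (-1) := by
        rw [← pow_add, show ((-1 : R) ^ ((a' : ℕ) + 1 + (b : ℕ) + 1) * (-1)
          = (-1 : R) ^ ((a' : ℕ) + 1 + (b : ℕ) + 2)) by ring]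
        exact neg_one_pow_mod _ _ (by simp [Fin.val_last]; omega)
      calc _ = ((-1 : R) ^ ((Fin.last (p + 1) : ℕ) + (b : ℕ)) *
            (-1 : R) ^ ((Fin.last p : ℕ) + (a' : ℕ))) *
            ((Matrix.of fun r c : Fin p =>
              H (Fin.castAdd 2 r) (delTwo (b.succAbove a') b hne c)).det *
            (H (Fin.natAdd p 0) (b.succAbove a') * H (Fin.natAdd p 1) b)) := by ring
        _ = _ := by rw [hsign]; ring
  -- Step B : regroup the sum over ordered pairs.
  rw [stepA, Finset.sum_comm]
  have split : ∀ a b : Fin (p + 2), lapT H a b =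
      (if a < b then lapT H a b else 0) + (if b < a then lapT H a b else 0) := by
    intro a b
    rcases lt_trichotomy a b with h | h | h
    · simp [h, asymm h]
    · simp [h, lapT_self]
    · simp [h, asymm h]
  calc ∑ a : Fin (p + 2), ∑ b : Fin (p + 2), lapT H a b
      = ∑ a : Fin (p + 2), ∑ b : Fin (p + 2),
          ((if a < b then lapT H a b else 0) + (if b < a then lapT H a b else 0)) := by
        exact Finset.sum_congr rfl fun a _ => Finset.sum_congr rfl fun b _ => split a b
    _ = (∑ a : Fin (p + 2), ∑ b : Fin (p + 2), if a < b then lapT H a b else 0)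
        + ∑ a : Fin (p + 2), ∑ b : Fin (p + 2), if b < a then lapT H a b else 0 := by
        simp [Finset.sum_add_distrib]
    _ = (∑ a : Fin (p + 2), ∑ b : Fin (p + 2), if a < b then lapT H a b else 0)
        + ∑ a : Fin (p + 2), ∑ b : Fin (p + 2), if a < b then lapT H b a else 0 := by
        congr 1
        exact Finset.sum_comm
    _ = ∑ a : Fin (p + 2), ∑ b : Fin (p + 2),
          ((if a < b then lapT H a b else 0) + (if a < b then lapT H b a else 0)) := by
        simp [Finset.sum_add_distrib]
    _ = _ := by
        refine Finset.sum_congr rfl fun a _ => Finset.sum_congr rfl fun b _ => ?_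
        rcases lt_or_ge a b with h | h
        · rw [if_pos h, if_pos h, dif_pos h]
          have hne : a ≠ b := ne_of_lt h
          rw [lapT, dif_pos hne, lapT, dif_pos hne.symm, if_pos h, if_neg (asymm h),
            delTwo_symm a b hne]
          have h2 : (Matrix.of fun r c : Fin 2 => H (Fin.natAdd p r) (![a, b] c)).det
              = H (Fin.natAdd p 0) a * H (Fin.natAdd p 1) b
                - H (Fin.natAdd p 0) b * H (Fin.natAdd p 1) a := by
            rw [Matrix.det_fin_two]
            simp
          rw [h2, show (b : ℕ) + (a : ℕ) + 1 = (a : ℕ) + (b : ℕ) + 1 by ring]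
          ring
        · rw [if_neg (not_lt.mpr h), if_neg (not_lt.mpr h), dif_neg (not_lt.mpr h), add_zero]
end

section
/- In the polynomial setting with f₁,…,f_{n−2}, ω₁,…,ω_n ∈ ℂ[z₁,…,z_n], for any indices 1 ≤ m < l ≤ n and 1 ≤ j < k ≤ n one has the congruence f_{m,l} · ∂(m_j,m_k)/∂(z_m,z_l) ≡ f_{j,k} · ∂(m_m,m_l)/∂(z_m,z_l) modulo the ideal J, where ∂(g,h)/∂(z_m,z_l) denotes the 2×2 Jacobian determinant (∂g/∂z_m)(∂h/∂z_l) − (∂g/∂z_l)(∂h/∂z_m). -/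
open Matrix MvPolynomial

/-- The `(n−1) × n` matrix `A` (`n = p + 2`) whose first `n − 2` rows are the gradients
of `f₁, …, f_{n−2}` and whose last row is `(ω₁, …, ω_n)`. -/
noncomputable def gradMatrix {p : ℕ} (f : Fin p → MvPolynomial (Fin (p + 2)) ℂ)
    (w : Fin (p + 2) → MvPolynomial (Fin (p + 2)) ℂ) :
    Matrix (Fin (p + 1)) (Fin (p + 2)) (MvPolynomial (Fin (p + 2)) ℂ) :=
  Matrix.of fun r c => Fin.lastCases (w c) (fun r' : Fin p => pderiv c (f r')) r

/-- `m_i`: the determinant of the `(n−1) × (n−1)` matrix obtained from `A` by deleting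
the `i`-th column. -/
noncomputable def mMinor {p : ℕ} (f : Fin p → MvPolynomial (Fin (p + 2)) ℂ)
    (w : Fin (p + 2) → MvPolynomial (Fin (p + 2)) ℂ) (i : Fin (p + 2)) :
    MvPolynomial (Fin (p + 2)) ℂ :=
  ((gradMatrix f w).submatrix id i.succAbove).det

/-- The ideal `J` generated by `f₁, …, f_{n−2}, m₁, …, m_n`. -/
noncomputable def idealJ {p : ℕ} (f : Fin p → MvPolynomial (Fin (p + 2)) ℂ)
    (w : Fin (p + 2) → MvPolynomial (Fin (p + 2)) ℂ) :
    Ideal (MvPolynomial (Fin (p + 2)) ℂ) :=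
  Ideal.span (Set.range f ∪ Set.range (mMinor f w))

/-- `f_{a,b} = ∂(f₁,…,f_{n−2})/∂(z₁,…,ẑ_a,…,ẑ_b,…,z_n)`: the determinant of the matrix
of partial derivatives of `f₁, …, f_{n−2}` with the columns `a` and `b` deleted. -/
noncomputable def fMinor {p : ℕ} (f : Fin p → MvPolynomial (Fin (p + 2)) ℂ)
    (a b : Fin (p + 2)) (hab : a ≠ b) : MvPolynomial (Fin (p + 2)) ℂ :=
  (Matrix.of fun r c : Fin p => pderiv (delTwo a b hab c) (f r)).det

/-- `∂(g,h)/∂(z_a,z_b)`: the `2 × 2` Jacobian determinant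
`(∂g/∂z_a)(∂h/∂z_b) − (∂g/∂z_b)(∂h/∂z_a)`. -/
noncomputable def jac2 {p : ℕ} (g h : MvPolynomial (Fin (p + 2)) ℂ)
    (a b : Fin (p + 2)) : MvPolynomial (Fin (p + 2)) ℂ :=
  pderiv a g * pderiv b h - pderiv b g * pderiv a h


variable {R : Type*} [CommRing R]

lemma det_updateRow_finset_sum {n : ℕ} {ι : Type*} [DecidableEq ι]
    (M : Matrix (Fin n) (Fin n) R) (j : Fin n) (s : Finset ι) (c : ι → R)
    (v : ι → Fin n → R) :
    (M.updateRow j (∑ i ∈ s, c i • v i)).det = ∑ i ∈ s, c i * (M.updateRow j (v i)).det := by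
  induction' s using Finset.induction_on with a s ha ih
  · simp
    exact Matrix.det_eq_zero_of_row_eq_zero j (by simp)
  · rw [Finset.sum_insert ha, Finset.sum_insert ha, Matrix.det_updateRow_add,
      Matrix.det_updateRow_smul, ih]

lemma det_row_expand {n : ℕ} (M : Matrix (Fin n) (Fin n) R) (j : Fin n) (z : Fin n → R) :
    (M.updateRow j z).det = ∑ c, z c * (M.updateRow j (Pi.single c 1)).det := by
  have hz : z = ∑ c, z c • (Pi.single c 1 : Fin n → R) := by
    funext d
    simp [Finset.sum_apply, Pi.single_apply]
  rw [hz, det_updateRow_finset_sum]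
  simp [Finset.sum_apply, Pi.single_apply]


lemma cramer'' {n : ℕ} (C : Matrix (Fin (n+1)) (Fin n) R) (c : Fin n) :
    ∑ i : Fin (n+1), (-1 : R) ^ (i : ℕ) * C i c * (C.submatrix i.succAbove id).det = 0 := by
  classical
  set Csq : Matrix (Fin (n+1)) (Fin (n+1)) R := Matrix.of fun i => Fin.cons (C i c) (C i) with hCsq
  have h0 : Csq.det = 0 := by
    refine Matrix.det_zero_of_column_eq (M := Csq) (i := (0 : Fin (n+1))) (j := c.succ)
      (Fin.succ_ne_zero c).symm ?_
    intro k
    simp [hCsq]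
  have h1 := Matrix.det_succ_column_zero Csq
  rw [h0] at h1
  have h2 : ∑ i : Fin (n+1), (-1 : R) ^ (i : ℕ) * C i c * (C.submatrix i.succAbove id).det
      = ∑ i : Fin n.succ, (-1 : R) ^ (i : ℕ) * Csq i 0 * (Csq.submatrix i.succAbove Fin.succ).det := by
    refine Finset.sum_congr rfl fun i _ => ?_
    have h3 : (Csq.submatrix i.succAbove Fin.succ) = C.submatrix i.succAbove id := by
      ext a b
      simp [hCsq]
    rw [h3]
    simp [hCsq]
  rw [h2, ← h1]

section SnocLemmas

variable {α : Type*} {q : ℕ}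

lemma snoc2_last (B : Fin q → α) (x y : α) :
    (Fin.snoc (Fin.snoc B x) y : Fin (q+2) → α) (Fin.last (q+1)) = y := by
  rw [Fin.snoc_last]

lemma snoc2_x (B : Fin q → α) (x y : α) :
    (Fin.snoc (Fin.snoc B x) y : Fin (q+2) → α) ((Fin.last q).castSucc) = x := by
  rw [Fin.snoc_castSucc, Fin.snoc_last]

lemma snoc2_B (B : Fin q → α) (x y : α) (r : Fin q) :
    (Fin.snoc (Fin.snoc B x) y : Fin (q+2) → α) (r.castSucc.castSucc) = B r := by
  rw [Fin.snoc_castSucc, Fin.snoc_castSucc]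

lemma snoc3_last (B : Fin q → α) (x y u : α) :
    (Fin.snoc (Fin.snoc (Fin.snoc B x) y) u : Fin (q+3) → α) (Fin.last (q+2)) = u := by
  rw [Fin.snoc_last]

lemma snoc3_y (B : Fin q → α) (x y u : α) :
    (Fin.snoc (Fin.snoc (Fin.snoc B x) y) u : Fin (q+3) → α)
      ((Fin.last (q+1)).castSucc) = y := by
  rw [Fin.snoc_castSucc, Fin.snoc_last]

lemma snoc3_x (B : Fin q → α) (x y u : α) :
    (Fin.snoc (Fin.snoc (Fin.snoc B x) y) u : Fin (q+3) → α)
      ((Fin.last q).castSucc.castSucc) = x := by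
  rw [Fin.snoc_castSucc, Fin.snoc_castSucc, Fin.snoc_last]

lemma snoc3_B (B : Fin q → α) (x y u : α) (r : Fin q) :
    (Fin.snoc (Fin.snoc (Fin.snoc B x) y) u : Fin (q+3) → α)
      (r.castSucc.castSucc.castSucc) = B r := by
  rw [Fin.snoc_castSucc, Fin.snoc_castSucc, Fin.snoc_castSucc]

end SnocLemmas

section Dd

variable {p : ℕ}
variable (f : Fin p → MvPolynomial (Fin (p + 2)) ℂ)

local notation "RR" => MvPolynomial (Fin (p + 2)) ℂ

/-- gradient rows -/
noncomputable def Bg : Fin p → Fin (p + 2) → RR := fun r c => pderiv c (f r)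

/-- the `n × n` determinant with rows `f`-gradients, `x`, `y`. -/
noncomputable def Dd (x y : Fin (p + 2) → RR) : RR :=
  (Matrix.of (Fin.snoc (Fin.snoc (Bg f) x) y) : Matrix (Fin (p+2)) (Fin (p+2)) RR).det

noncomputable def ee (c : Fin (p + 2)) : Fin (p + 2) → RR := Pi.single c 1

lemma Dd_linear_right (x z : Fin (p + 2) → RR) :
    Dd f x z = ∑ c, z c * Dd f x (ee c) := by
  have h0 : ∀ y : Fin (p+2) → RR,
      (Matrix.of (Fin.snoc (Fin.snoc (Bg f) x) z) : Matrix (Fin (p+2)) (Fin (p+2)) RR).updateRow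
        (Fin.last (p+1)) y = Matrix.of (Fin.snoc (Fin.snoc (Bg f) x) y) := by
    intro y
    funext r c
    induction r using Fin.lastCases with
    | last => simp [Matrix.updateRow_apply, Fin.snoc_last]
    | cast r' =>
      simp [Matrix.updateRow_apply, Fin.snoc_castSucc, (Fin.castSucc_lt_last r').ne]
  have h1 : Dd f x z =
      ((Matrix.of (Fin.snoc (Fin.snoc (Bg f) x) z) :
        Matrix (Fin (p+2)) (Fin (p+2)) RR).updateRow (Fin.last (p+1)) z).det := by
    rw [h0]
    rfl
  rw [h1, det_row_expand]
  refine Finset.sum_congr rfl fun c _ => ?_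
  rw [h0]
  rfl

lemma Dd_row_eq (x : Fin (p + 2) → RR) (r : Fin p) : Dd f x (Bg f r) = 0 := by
  refine Matrix.det_zero_of_row_eq (i := ((r.castSucc).castSucc : Fin (p+2)))
    (j := Fin.last (p+1)) (Fin.castSucc_lt_last _).ne ?_
  funext c
  simp [Fin.snoc_castSucc, Fin.snoc_last]

lemma Dd_antisymm (x y : Fin (p + 2) → RR) : Dd f x y = - Dd f y x := by
  set M : Matrix (Fin (p+2)) (Fin (p+2)) RR := Matrix.of (Fin.snoc (Fin.snoc (Bg f) x) y)
    with hM
  have hab : ((Fin.last p).castSucc : Fin (p+2)) ≠ Fin.last (p+1) := by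
    intro h
    have := congrArg Fin.val h
    simp at this
  set σ : Equiv.Perm (Fin (p+2)) := Equiv.swap ((Fin.last p).castSucc) (Fin.last (p+1))
    with hσ
  have h := Matrix.det_permute σ M
  have h2 : (M.submatrix σ id) = Matrix.of (Fin.snoc (Fin.snoc (Bg f) y) x) := by
    funext r c
    show M (σ r) c = _
    induction r using Fin.lastCases with
    | last =>
      rw [hσ, Equiv.swap_apply_right, hM]
      show (Fin.snoc (Fin.snoc (Bg f) x) y : Fin (p+2) → (Fin (p+2) → RR))
        ((Fin.last p).castSucc) c = (Fin.snoc (Fin.snoc (Bg f) y) x :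
          Fin (p+2) → (Fin (p+2) → RR)) (Fin.last (p+1)) c
      rw [snoc2_x, snoc2_last]
    | cast r' =>
      induction r' using Fin.lastCases with
      | last =>
        rw [hσ, Equiv.swap_apply_left, hM]
        show (Fin.snoc (Fin.snoc (Bg f) x) y : Fin (p+2) → (Fin (p+2) → RR))
          (Fin.last (p+1)) c = (Fin.snoc (Fin.snoc (Bg f) y) x :
            Fin (p+2) → (Fin (p+2) → RR)) ((Fin.last p).castSucc) c
        rw [snoc2_x, snoc2_last]
      | cast r'' =>
        have hne1 : (r''.castSucc.castSucc : Fin (p+2)) ≠ (Fin.last p).castSucc := by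
          intro h'
          have := congrArg Fin.val h'
          have h2 := r''.isLt
          simp at this
          omega
        have hne2 : (r''.castSucc.castSucc : Fin (p+2)) ≠ Fin.last (p+1) := by
          intro h'
          have := congrArg Fin.val h'
          have h2 := r''.isLt
          simp at this
          omega
        rw [hσ, Equiv.swap_apply_of_ne_of_ne hne1 hne2, hM]
        show (Fin.snoc (Fin.snoc (Bg f) x) y : Fin (p+2) → (Fin (p+2) → RR))
          (r''.castSucc.castSucc) c = (Fin.snoc (Fin.snoc (Bg f) y) x :
            Fin (p+2) → (Fin (p+2) → RR)) (r''.castSucc.castSucc) c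
        rw [snoc2_B, snoc2_B]
  rw [h2] at h
  have hsign : Equiv.Perm.sign σ = -1 := Equiv.Perm.sign_swap hab
  rw [hsign] at h
  show M.det = - (Matrix.of (Fin.snoc (Fin.snoc (Bg f) y) x) :
    Matrix (Fin (p+2)) (Fin (p+2)) RR).det
  rw [h]
  push_cast
  ring

lemma Dd_E (x y u v : Fin (p + 2) → RR) :
    Dd f y u * Dd f v x - Dd f x u * Dd f v y + Dd f x y * Dd f v u = 0 := by
  classical
  set C : Matrix (Fin (p+3)) (Fin (p+2)) RR :=
    Matrix.of (Fin.snoc (Fin.snoc (Fin.snoc (Bg f) x) y) u) with hC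
  -- the master sum vanishes
  have S0 : (∑ t : Fin (p+3),
      (-1:RR)^(t:ℕ) * (C.submatrix t.succAbove id).det * Dd f v (C t)) = 0 := by
    have hterm : ∀ t : Fin (p+3), (-1:RR)^(t:ℕ) * (C.submatrix t.succAbove id).det * Dd f v (C t)
        = ∑ c, ((-1:RR)^(t:ℕ) * C t c * (C.submatrix t.succAbove id).det) * Dd f v (ee c) := by
      intro t
      rw [Dd_linear_right, Finset.mul_sum]
      refine Finset.sum_congr rfl fun c _ => ?_
      ring
    rw [Finset.sum_congr rfl (fun t _ => hterm t), Finset.sum_comm]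
    refine Finset.sum_eq_zero fun c _ => ?_
    rw [← Finset.sum_mul, cramer'' C c, zero_mul]
  -- identify the three distinguished deleted matrices
  have hdel_u : C.submatrix (Fin.last (p+2)).succAbove id
      = Matrix.of (Fin.snoc (Fin.snoc (Bg f) x) y) := by
    funext r c
    rw [Matrix.submatrix_apply, Fin.succAbove_last, id_eq, hC]
    show (Fin.snoc (Fin.snoc (Fin.snoc (Bg f) x) y) u : Fin (p+3) → (Fin (p+2) → RR))
      (Fin.castSucc r) c = _
    rw [Fin.snoc_castSucc]
    rfl
  have hdel_y : C.submatrix ((Fin.last (p+1)).castSucc).succAbove id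
      = Matrix.of (Fin.snoc (Fin.snoc (Bg f) x) u) := by
    funext r c
    rw [Matrix.submatrix_apply, id_eq, hC]
    induction r using Fin.lastCases with
    | last =>
      rw [Fin.succAbove_of_le_castSucc _ _ (le_refl _), Fin.succ_last]
      show (Fin.snoc (Fin.snoc (Fin.snoc (Bg f) x) y) u : Fin (p+3) → (Fin (p+2) → RR))
        (Fin.last (p+2)) c = (Fin.snoc (Fin.snoc (Bg f) x) u :
          Fin (p+2) → (Fin (p+2) → RR)) (Fin.last (p+1)) c
      rw [snoc3_last, snoc2_last]
    | cast s =>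
      rw [Fin.succAbove_of_castSucc_lt _ _ (by
        rw [Fin.castSucc_lt_castSucc_iff]
        exact Fin.castSucc_lt_last s)]
      show (Fin.snoc (Fin.snoc (Fin.snoc (Bg f) x) y) u : Fin (p+3) → (Fin (p+2) → RR))
        (Fin.castSucc (Fin.castSucc s)) c = (Fin.snoc (Fin.snoc (Bg f) x) u :
          Fin (p+2) → (Fin (p+2) → RR)) (Fin.castSucc s) c
      rw [Fin.snoc_castSucc, Fin.snoc_castSucc, Fin.snoc_castSucc]
  have hdel_x : C.submatrix ((Fin.last p).castSucc.castSucc).succAbove id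
      = Matrix.of (Fin.snoc (Fin.snoc (Bg f) y) u) := by
    funext r c
    rw [Matrix.submatrix_apply, id_eq, hC]
    induction r using Fin.lastCases with
    | last =>
      rw [Fin.succAbove_of_le_castSucc _ _ (by
        rw [Fin.le_def]
        simp only [Fin.coe_castSucc, Fin.val_last]
        omega), Fin.succ_last]
      show (Fin.snoc (Fin.snoc (Fin.snoc (Bg f) x) y) u : Fin (p+3) → (Fin (p+2) → RR))
        (Fin.last (p+2)) c = (Fin.snoc (Fin.snoc (Bg f) y) u :
          Fin (p+2) → (Fin (p+2) → RR)) (Fin.last (p+1)) c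
      rw [snoc3_last, snoc2_last]
    | cast s =>
      induction s using Fin.lastCases with
      | last =>
        rw [Fin.succAbove_of_le_castSucc _ _ (le_refl _), (by
            apply Fin.ext
            simp : ((Fin.last p).castSucc : Fin (p+2)).succ
              = ((Fin.last (p+1)).castSucc : Fin (p+3)))]
        show (Fin.snoc (Fin.snoc (Fin.snoc (Bg f) x) y) u : Fin (p+3) → (Fin (p+2) → RR))
          ((Fin.last (p+1)).castSucc) c = (Fin.snoc (Fin.snoc (Bg f) y) u :
            Fin (p+2) → (Fin (p+2) → RR)) ((Fin.last p).castSucc) c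
        rw [snoc3_y, snoc2_x]
      | cast s' =>
        rw [Fin.succAbove_of_castSucc_lt _ _ (by
          rw [Fin.lt_def]
          simp only [Fin.coe_castSucc]
          exact s'.isLt)]
        show (Fin.snoc (Fin.snoc (Fin.snoc (Bg f) x) y) u : Fin (p+3) → (Fin (p+2) → RR))
          (s'.castSucc.castSucc.castSucc) c = (Fin.snoc (Fin.snoc (Bg f) y) u :
            Fin (p+2) → (Fin (p+2) → RR)) (s'.castSucc.castSucc) c
        rw [snoc3_B, snoc2_B]
  -- split the sum
  rw [Fin.sum_univ_castSucc, Fin.sum_univ_castSucc, Fin.sum_univ_castSucc] at S0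
  have hzero : (∑ t : Fin p, (-1:RR)^((t.castSucc.castSucc.castSucc : Fin (p+3)) : ℕ)
      * (C.submatrix (t.castSucc.castSucc.castSucc).succAbove id).det
      * Dd f v (C t.castSucc.castSucc.castSucc)) = 0 := by
    refine Finset.sum_eq_zero fun t _ => ?_
    have : C t.castSucc.castSucc.castSucc = Bg f t := by
      rw [hC]
      show (Fin.snoc (Fin.snoc (Fin.snoc (Bg f) x) y) u : Fin (p+3) → (Fin (p+2) → RR))
        (t.castSucc.castSucc.castSucc) = Bg f t
      rw [snoc3_B]
    rw [this, Dd_row_eq, mul_zero]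
  rw [hzero, zero_add] at S0
  have hCx : C ((Fin.last p).castSucc.castSucc) = x := by
    rw [hC]
    show (Fin.snoc (Fin.snoc (Fin.snoc (Bg f) x) y) u : Fin (p+3) → (Fin (p+2) → RR))
      ((Fin.last p).castSucc.castSucc) = x
    rw [snoc3_x]
  have hCy : C ((Fin.last (p+1)).castSucc) = y := by
    rw [hC]
    show (Fin.snoc (Fin.snoc (Fin.snoc (Bg f) x) y) u : Fin (p+3) → (Fin (p+2) → RR))
      ((Fin.last (p+1)).castSucc) = y
    rw [snoc3_y]
  have hCu : C (Fin.last (p+2)) = u := by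
    rw [hC]
    show (Fin.snoc (Fin.snoc (Fin.snoc (Bg f) x) y) u : Fin (p+3) → (Fin (p+2) → RR))
      (Fin.last (p+2)) = u
    rw [snoc3_last]
  rw [hCx, hCy, hCu, hdel_u, hdel_y, hdel_x] at S0
  simp only [Fin.coe_castSucc, Fin.val_last] at S0
  have hDyu : (Matrix.of (Fin.snoc (Fin.snoc (Bg f) y) u) :
      Matrix (Fin (p+2)) (Fin (p+2)) RR).det = Dd f y u := rfl
  have hDxu : (Matrix.of (Fin.snoc (Fin.snoc (Bg f) x) u) :
      Matrix (Fin (p+2)) (Fin (p+2)) RR).det = Dd f x u := rfl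
  have hDxy : (Matrix.of (Fin.snoc (Fin.snoc (Bg f) x) y) :
      Matrix (Fin (p+2)) (Fin (p+2)) RR).det = Dd f x y := rfl
  rw [hDyu, hDxu, hDxy] at S0
  have hsgn : (-1:RR)^(p+1) = -(-1:RR)^p := by
    rw [pow_succ]
    ring
  have hsgn2 : (-1:RR)^(p+2) = (-1:RR)^p := by
    rw [pow_add]
    ring
  rw [hsgn, hsgn2] at S0
  have hfac : (-1:RR)^p * (Dd f y u * Dd f v x - Dd f x u * Dd f v y + Dd f x y * Dd f v u)
      = 0 := by
    rw [← S0]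
    ring
  have hunit : IsUnit ((-1:RR)^p) := (IsUnit.neg isUnit_one).pow p
  have := hunit.mul_right_eq_zero.mp hfac
  exact this

noncomputable def mDet (w : Fin (p + 2) → RR) (i : Fin (p + 2)) : RR := Dd f w (ee i)

noncomputable def fDet (a b : Fin (p + 2)) : RR := Dd f (ee a) (ee b)

lemma gradMatrix_eq (w : Fin (p + 2) → RR) :
    gradMatrix f w = Matrix.of (Fin.snoc (Bg f) w) := by
  funext r c
  induction r using Fin.lastCases with
  | last => simp [gradMatrix, Fin.snoc_last]
  | cast r' => simp [gradMatrix, Fin.snoc_castSucc, Bg]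

lemma mDet_eq (w : Fin (p + 2) → RR) (i : Fin (p + 2)) :
    mDet f w i = (-1 : RR)^(p + 1 + (i : ℕ)) * mMinor f w i := by
  set M : Matrix (Fin (p+2)) (Fin (p+2)) RR :=
    Matrix.of (Fin.snoc (Fin.snoc (Bg f) w) (ee i)) with hM
  have h := Matrix.det_succ_row M (Fin.last (p+1))
  have hrow : ∀ j, M (Fin.last (p+1)) j = if j = i then 1 else 0 := by
    intro j
    rw [hM]
    show (Fin.snoc (Fin.snoc (Bg f) w) (ee i) : Fin (p+2) → (Fin (p+2) → RR))
      (Fin.last (p+1)) j = _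
    rw [snoc2_last]
    simp [ee, Pi.single_apply]
  have hcollapse : ∑ j : Fin (p+2), (-1:RR) ^ ((Fin.last (p+1) : Fin (p+2)) + j : ℕ) * M (Fin.last (p+1)) j
      * (M.submatrix (Fin.last (p+1)).succAbove j.succAbove).det
      = (-1:RR) ^ (p + 1 + (i:ℕ)) * (M.submatrix (Fin.last (p+1)).succAbove i.succAbove).det := by
    rw [Finset.sum_eq_single i]
    · rw [hrow i, if_pos rfl, mul_one]
      simp
    · intro j _ hj
      rw [hrow j, if_neg hj]
      ring
    · intro hi
      exact absurd (Finset.mem_univ i) hi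
  have hsub : M.submatrix (Fin.last (p+1)).succAbove i.succAbove
      = (gradMatrix f w).submatrix id i.succAbove := by
    rw [gradMatrix_eq]
    funext r c
    rw [Matrix.submatrix_apply, Matrix.submatrix_apply, Fin.succAbove_last, id_eq]
    show (Fin.snoc (Fin.snoc (Bg f) w) (ee i) : Fin (p+2) → (Fin (p+2) → RR))
      (Fin.castSucc r) (i.succAbove c) = _
    rw [Fin.snoc_castSucc]
    rfl
  rw [hcollapse, hsub] at h
  exact h

lemma mMinor_mem (w : Fin (p + 2) → RR) (i : Fin (p + 2)) : mMinor f w i ∈ idealJ f w := by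
  exact Ideal.subset_span (Set.mem_union_right _ ⟨i, rfl⟩)

lemma mDet_mem (w : Fin (p + 2) → RR) (i : Fin (p + 2)) : mDet f w i ∈ idealJ f w := by
  rw [mDet_eq]
  exact Ideal.mul_mem_left _ _ (mMinor_mem f w i)

lemma fDet_eq (a b : Fin (p + 2)) (hab : a < b) :
    fDet f a b = (-1 : RR)^((a : ℕ) + (b : ℕ) + 1) * fMinor f a b (ne_of_lt hab) := by
  have hanl : a ≠ Fin.last (p+1) := ne_of_lt (lt_of_lt_of_le hab (Fin.le_last b))
  set j0 : Fin (p+1) := a.castPred hanl with hj0def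
  have hcs : Fin.castSucc j0 = a := Fin.castSucc_castPred a hanl
  have hj0 : b.succAbove j0 = a := by
    rw [Fin.succAbove_of_castSucc_lt _ _ (by rw [hcs]; exact hab), hcs]
  set M : Matrix (Fin (p+2)) (Fin (p+2)) RR :=
    Matrix.of (Fin.snoc (Fin.snoc (Bg f) (ee a)) (ee b)) with hM
  set N : Matrix (Fin (p+1)) (Fin (p+1)) RR :=
    M.submatrix (Fin.last (p+1)).succAbove b.succAbove with hN
  -- first expansion
  have h1 := Matrix.det_succ_row M (Fin.last (p+1))
  have hrow1 : ∀ j, M (Fin.last (p+1)) j = if j = b then 1 else 0 := by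
    intro j
    rw [hM]
    show (Fin.snoc (Fin.snoc (Bg f) (ee a)) (ee b) : Fin (p+2) → (Fin (p+2) → RR))
      (Fin.last (p+1)) j = _
    rw [snoc2_last]
    simp [ee, Pi.single_apply]
  have hc1 : ∑ j : Fin (p+2), (-1:RR) ^ ((Fin.last (p+1) : Fin (p+2)) + j : ℕ)
      * M (Fin.last (p+1)) j * (M.submatrix (Fin.last (p+1)).succAbove j.succAbove).det
      = (-1:RR) ^ (p + 1 + (b:ℕ)) * N.det := by
    rw [Finset.sum_eq_single b]
    · rw [hrow1 b, if_pos rfl, mul_one, hN]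
      simp
    · intro j _ hj
      rw [hrow1 j, if_neg hj]
      ring
    · intro hb
      exact absurd (Finset.mem_univ b) hb
  rw [hc1] at h1
  -- second expansion
  have h2 := Matrix.det_succ_row N (Fin.last p)
  have hrow2 : ∀ j, N (Fin.last p) j = if j = j0 then 1 else 0 := by
    intro j
    rw [hN, Matrix.submatrix_apply, Fin.succAbove_last, hM]
    show (Fin.snoc (Fin.snoc (Bg f) (ee a)) (ee b) : Fin (p+2) → (Fin (p+2) → RR))
      (Fin.castSucc (Fin.last p)) (b.succAbove j) = _
    rw [snoc2_x]
    by_cases hj : j = j0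
    · rw [if_pos hj, hj, hj0]
      simp [ee]
    · rw [if_neg hj]
      have : b.succAbove j ≠ a := by
        rw [← hj0]
        exact fun h => hj (Fin.succAbove_right_injective h)
      simp [ee, Pi.single_apply, this]
  have hc2 : ∑ j : Fin (p+1), (-1:RR) ^ ((Fin.last p : Fin (p+1)) + j : ℕ)
      * N (Fin.last p) j * (N.submatrix (Fin.last p).succAbove j.succAbove).det
      = (-1:RR) ^ (p + (a:ℕ)) * (N.submatrix (Fin.last p).succAbove j0.succAbove).det := by
    rw [Finset.sum_eq_single j0]
    · rw [hrow2 j0, if_pos rfl, mul_one]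
      have : ((j0 : Fin (p+1)) : ℕ) = (a : ℕ) := by
        rw [hj0def]
        simp
      rw [Fin.val_last, this]
    · intro j _ hj
      rw [hrow2 j, if_neg hj]
      ring
    · intro hb
      exact absurd (Finset.mem_univ j0) hb
  rw [hc2] at h2
  -- identify the inner matrix with the fMinor matrix
  have hcomp : (fun c => b.succAbove (j0.succAbove c)) = delTwo a b (ne_of_lt hab) := by
    have hcard : ({a, b}ᶜ : Finset (Fin (p + 2))).card = p := by
      rw [Finset.card_compl, Finset.card_insert_of_notMem (by simpa using (ne_of_lt hab)),
        Finset.card_singleton, Fintype.card_fin]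
      omega
    have hfs : ∀ x : Fin p, b.succAbove (j0.succAbove x) ∈ ({a, b}ᶜ : Finset (Fin (p + 2))) := by
      intro x
      simp only [Finset.mem_compl, Finset.mem_insert, Finset.mem_singleton]
      push_neg
      constructor
      · rw [← hj0]
        exact fun h => Fin.succAbove_ne j0 x (Fin.succAbove_right_injective h)
      · exact Fin.succAbove_ne b _
    have hmono : StrictMono (fun c : Fin p => b.succAbove (j0.succAbove c)) :=
      (Fin.strictMono_succAbove b).comp (Fin.strictMono_succAbove j0)
    have := Finset.orderEmbOfFin_unique hcard hfs hmono
    rw [this]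
    rfl
  have hN2 : N.submatrix (Fin.last p).succAbove j0.succAbove
      = Matrix.of (fun r c : Fin p => pderiv (delTwo a b (ne_of_lt hab) c) (f r)) := by
    funext r c
    rw [Matrix.submatrix_apply, Fin.succAbove_last, hN, Matrix.submatrix_apply,
      Fin.succAbove_last, hM]
    show (Fin.snoc (Fin.snoc (Bg f) (ee a)) (ee b) : Fin (p+2) → (Fin (p+2) → RR))
      (Fin.castSucc (Fin.castSucc r)) (b.succAbove (j0.succAbove c)) = _
    rw [snoc2_B, ← hcomp]
    rfl
  rw [hN2] at h2
  have : fDet f a b = (-1:RR)^(p+1+(b:ℕ)) * ((-1:RR)^(p+(a:ℕ))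
      * fMinor f a b (ne_of_lt hab)) := by
    rw [fMinor]
    rw [← h2, ← h1]
    rfl
  rw [this, ← mul_assoc, ← pow_add]
  have hexp : (p + 1 + (b:ℕ)) + (p + (a:ℕ)) = ((a:ℕ) + (b:ℕ) + 1) + 2*p := by omega
  rw [hexp, pow_add, pow_mul]
  norm_num

end Dd


/-- For `n ≥ 3` (`n = p + 2`, `1 ≤ p`) and indices `m < l`, `j < k` one has the
congruence `f_{m,l} · ∂(m_j,m_k)/∂(z_m,z_l) ≡ f_{j,k} · ∂(m_m,m_l)/∂(z_m,z_l)`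
modulo the ideal `J`. -/
theorem fMinor_mul_jac2_congr {p : ℕ} (hp : 1 ≤ p)
    (f : Fin p → MvPolynomial (Fin (p + 2)) ℂ)
    (w : Fin (p + 2) → MvPolynomial (Fin (p + 2)) ℂ)
    (m l j k : Fin (p + 2)) (hml : m < l) (hjk : j < k) :
    fMinor f m l (ne_of_lt hml) * jac2 (mMinor f w j) (mMinor f w k) m l -
      fMinor f j k (ne_of_lt hjk) * jac2 (mMinor f w m) (mMinor f w l) m l ∈
      idealJ f w := by
  classical
  -- notation
  have hsq : ∀ e : ℕ, (-1 : MvPolynomial (Fin (p+2)) ℂ)^e * (-1 : MvPolynomial (Fin (p+2)) ℂ)^e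
      = 1 := by
    intro e
    rw [← pow_add, ← two_mul, pow_mul]
    norm_num
  -- (P): the exact Plücker-type identity
  have hP : ∀ a b i : Fin (p+2), fDet f b i * mDet f w a - fDet f a i * mDet f w b
      + fDet f a b * mDet f w i = 0 := fun a b i => Dd_E f (ee a) (ee b) (ee i) w
  -- derivatives of (P) modulo J
  have hD : ∀ c a b i : Fin (p+2), fDet f b i * pderiv c (mDet f w a)
      - fDet f a i * pderiv c (mDet f w b)
      + fDet f a b * pderiv c (mDet f w i) ∈ idealJ f w := by
    intro c a b i
    have h := congrArg (pderiv c) (hP a b i)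
    rw [map_add, map_sub, pderiv_mul, pderiv_mul, pderiv_mul, map_zero] at h
    have h2 : fDet f b i * pderiv c (mDet f w a) - fDet f a i * pderiv c (mDet f w b)
        + fDet f a b * pderiv c (mDet f w i)
        = pderiv c (fDet f a i) * mDet f w b - pderiv c (fDet f b i) * mDet f w a
          - pderiv c (fDet f a b) * mDet f w i := by
      linear_combination h
    rw [h2]
    refine Ideal.sub_mem _ (Ideal.sub_mem _ ?_ ?_) ?_ <;>
      exact Ideal.mul_mem_left _ _ (mDet_mem f w _)
  -- antisymmetry
  have hAs : ∀ a b : Fin (p+2), fDet f a b = - fDet f b a := fun a b =>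
    Dd_antisymm f (ee a) (ee b)
  -- the core congruence, proved in the quotient ring
  have hcore : fDet f m l * (pderiv m (mDet f w j) * pderiv l (mDet f w k)
      - pderiv l (mDet f w j) * pderiv m (mDet f w k))
      - fDet f j k * (pderiv m (mDet f w m) * pderiv l (mDet f w l)
      - pderiv l (mDet f w m) * pderiv m (mDet f w l)) ∈ idealJ f w := by
    rw [← Ideal.Quotient.eq_zero_iff_mem]
    set π := Ideal.Quotient.mk (idealJ f w) with hπ
    have qE : ∀ c a b i : Fin (p+2), π (fDet f b i) * π (pderiv c (mDet f w a))
        - π (fDet f a i) * π (pderiv c (mDet f w b))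
        + π (fDet f a b) * π (pderiv c (mDet f w i)) = 0 := by
      intro c a b i
      have := Ideal.Quotient.eq_zero_iff_mem.mpr (hD c a b i)
      rw [map_add, map_sub, _root_.map_mul, _root_.map_mul, _root_.map_mul] at this
      exact this
    have qA : ∀ a b : Fin (p+2), π (fDet f a b) = - π (fDet f b a) := by
      intro a b
      rw [hAs a b, map_neg]
    rw [map_sub, _root_.map_mul, _root_.map_mul, map_sub, map_sub, _root_.map_mul, _root_.map_mul, _root_.map_mul, _root_.map_mul]
    linear_combination (π (pderiv l (mDet f w k))) * qE m m l j
      - (π (pderiv l (mDet f w j))) * qE m m l k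
      + (π (pderiv m (mDet f w l))) * qE l j k m
      - (π (pderiv m (mDet f w m))) * qE l j k l
      - (π (pderiv m (mDet f w m))) * (π (pderiv l (mDet f w k))) * qA l j
      - (π (pderiv m (mDet f w l))) * (π (pderiv l (mDet f w j))) * qA k m
      + (π (pderiv m (mDet f w l))) * (π (pderiv l (mDet f w k))) * qA j m
      + (π (pderiv m (mDet f w m))) * (π (pderiv l (mDet f w j))) * qA k l
  -- converting the statement to `fDet`/`mDet` form
  have e1 : ∀ (a b : Fin (p+2)) (h : a < b), fMinor f a b (ne_of_lt h)
      = (-1 : MvPolynomial (Fin (p+2)) ℂ)^((a:ℕ)+(b:ℕ)+1) * fDet f a b := by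
    intro a b h
    rw [fDet_eq f a b h, ← mul_assoc, hsq, one_mul]
  have e2 : ∀ c i : Fin (p+2), pderiv c (mMinor f w i)
      = (-1 : MvPolynomial (Fin (p+2)) ℂ)^(p+1+(i:ℕ)) * pderiv c (mDet f w i) := by
    intro c i
    have hC : (-1 : MvPolynomial (Fin (p+2)) ℂ)^(p+1+(i:ℕ))
        = C ((-1 : ℂ)^(p+1+(i:ℕ))) := by
      rw [map_pow, map_neg, _root_.map_one]
    have hd : pderiv c (mDet f w i)
        = (-1 : MvPolynomial (Fin (p+2)) ℂ)^(p+1+(i:ℕ)) * pderiv c (mMinor f w i) := by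
      rw [mDet_eq, hC, pderiv_C_mul]
    rw [hd, ← mul_assoc, hsq, one_mul]
  have hκ : ((-1 : MvPolynomial (Fin (p+2)) ℂ)^((m:ℕ)+(l:ℕ)+1)
        * ((-1 : MvPolynomial (Fin (p+2)) ℂ)^(p+1+(j:ℕ))
          * (-1 : MvPolynomial (Fin (p+2)) ℂ)^(p+1+(k:ℕ))))
      = ((-1 : MvPolynomial (Fin (p+2)) ℂ)^((j:ℕ)+(k:ℕ)+1)
        * ((-1 : MvPolynomial (Fin (p+2)) ℂ)^(p+1+(m:ℕ))
          * (-1 : MvPolynomial (Fin (p+2)) ℂ)^(p+1+(l:ℕ)))) := by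
    rw [← pow_add, ← pow_add, ← pow_add, ← pow_add]
    congr 1
    omega
  have hXY : fMinor f m l (ne_of_lt hml) * jac2 (mMinor f w j) (mMinor f w k) m l -
      fMinor f j k (ne_of_lt hjk) * jac2 (mMinor f w m) (mMinor f w l) m l
      = ((-1 : MvPolynomial (Fin (p+2)) ℂ)^((m:ℕ)+(l:ℕ)+1)
        * ((-1 : MvPolynomial (Fin (p+2)) ℂ)^(p+1+(j:ℕ))
          * (-1 : MvPolynomial (Fin (p+2)) ℂ)^(p+1+(k:ℕ))))
        * (fDet f m l * (pderiv m (mDet f w j) * pderiv l (mDet f w k)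
            - pderiv l (mDet f w j) * pderiv m (mDet f w k))
          - fDet f j k * (pderiv m (mDet f w m) * pderiv l (mDet f w l)
            - pderiv l (mDet f w m) * pderiv m (mDet f w l))) := by
    rw [jac2, jac2, e1 m l hml, e1 j k hjk, e2 m j, e2 l k, e2 l j, e2 m k,
      e2 m m, e2 l l, e2 l m, e2 m l]
    set t1 := (-1 : MvPolynomial (Fin (p+2)) ℂ)^((m:ℕ)+(l:ℕ)+1) with ht1
    set t2 := (-1 : MvPolynomial (Fin (p+2)) ℂ)^(p+1+(j:ℕ)) with ht2
    set t3 := (-1 : MvPolynomial (Fin (p+2)) ℂ)^(p+1+(k:ℕ)) with ht3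
    set t4 := (-1 : MvPolynomial (Fin (p+2)) ℂ)^((j:ℕ)+(k:ℕ)+1) with ht4
    set t5 := (-1 : MvPolynomial (Fin (p+2)) ℂ)^(p+1+(m:ℕ)) with ht5
    set t6 := (-1 : MvPolynomial (Fin (p+2)) ℂ)^(p+1+(l:ℕ)) with ht6
    linear_combination (- (fDet f j k * (pderiv m (mDet f w m) * pderiv l (mDet f w l)
      - pderiv l (mDet f w m) * pderiv m (mDet f w l)))) * hκ
  rw [hXY]
  exact Ideal.mul_mem_left _ _ hcore
end
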